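/- GL_3(F) with F a field decomposes as the union of double cosets BwB where B is the upper triangular Borel and w ranges over the six 3×3 permutation matrices; moreover these double cosets are pairwise disjoint (Bruhat decomposition for GL_3). -/

import Mathlib

/-!
Existence is Gaussian elimination by upper triangular row operations. Among all `b * g` with
`b` invertible upper triangular, pick one whose rows have pointwise maximal sets of leading
zeros. If two rows `k < l` had their leading entries in the same column, subtracting a multiple
of row `l` from row `k` would enlarge the leading zeros of row `k`; so the leading columns form
a permutation `σ`, and permuting the rows of `b * g` by `σ⁻¹` gives an upper triangular `b'`.

Uniqueness: `b P_σ b' = c P_τ c'` rewrites as `P_σ V = W P_τ` with `V`, `W` upper triangular and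
`W` invertible. The `(k, τ k)` entries give `V (σ k) (τ k) = W k k ≠ 0`, so `σ k ≤ τ k` for
all `k`, which forces `σ = τ`.
-/

theorem Equiv.Perm.eq_one_of_forall_apply_le {n : Type*} [LinearOrder n] [WellFoundedLT n]
    {π : Equiv.Perm n} (h : ∀ j, π j ≤ j) : π = 1 := by
  ext j
  induction j using WellFoundedLT.induction with
  | _ j ih =>
    by_contra hne
    exact hne (π.injective (ih _ ((h j).lt_of_ne hne)))

theorem Equiv.Perm.eq_of_forall_apply_le {n : Type*} [LinearOrder n] [WellFoundedLT n]
    {σ τ : Equiv.Perm n} (h : ∀ k, σ k ≤ τ k) : σ = τ := by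
  rw [← mul_inv_eq_one]
  exact eq_one_of_forall_apply_le fun j => by simpa using h (τ⁻¹ j)

namespace Matrix

variable {n R : Type*} [LinearOrder n]

section CommRing

variable [CommRing R]

theorem isUpperTriangular_transvection {i j : n} (h : i < j) (c : R) :
    (transvection i j c).IsUpperTriangular := by
  intro a b (hba : b < a)
  simp only [transvection, add_apply, one_apply_ne hba.ne', single_apply, zero_add]
  split_ifs with hab
  · exact absurd (hab.1 ▸ hab.2 ▸ hba) h.not_gt
  · rfl

variable [Fintype n]

theorem IsUpperTriangular.inv {M : Matrix n n R} (hM : M.IsUpperTriangular) :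
    M⁻¹.IsUpperTriangular := by
  by_cases h : IsUnit M.det
  · have := M.invertibleOfIsUnitDet h
    exact blockTriangular_inv_of_blockTriangular hM
  · rw [nonsing_inv_apply_not_isUnit M h]
    exact blockTriangular_zero

theorem IsUpperTriangular.isUnit_diag {M : Matrix n n R} (hM : M.IsUpperTriangular)
    (h : IsUnit M.det) (k : n) : IsUnit (M k k) := by
  rw [det_of_isUpperTriangular hM, IsUnit.prod_univ_iff] at h
  exact h k

theorem permMatrix_mul_submatrix_symm (σ : Equiv.Perm n) (M : Matrix n n R) :
    σ.permMatrix R * M.submatrix σ.symm id = M := by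
  rw [PEquiv.toMatrix_toPEquiv_mul]
  simp

theorem perm_eq_of_permMatrix_mul_eq_mul_permMatrix [Nontrivial R] {σ τ : Equiv.Perm n}
    {V W : Matrix n n R} (hV : V.IsUpperTriangular) (hW : W.IsUpperTriangular)
    (hWdet : IsUnit W.det) (h : σ.permMatrix R * V = W * τ.permMatrix R) : σ = τ := by
  refine Equiv.Perm.eq_of_forall_apply_le fun k => not_lt.1 fun hlt => ?_
  have hentry : V (σ k) (τ k) = W k k := by
    simpa [PEquiv.toMatrix_toPEquiv_mul, PEquiv.mul_toMatrix_toPEquiv] using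
      congr_fun (congr_fun h k) (τ k)
  exact (hW.isUnit_diag hWdet k).ne_zero (hentry ▸ hV hlt)

theorem perm_eq_of_mul_permMatrix_mul_eq [Nontrivial R] {σ τ : Equiv.Perm n}
    {b b' c c' : Matrix n n R} (hb : IsUnit b.det) (hc : IsUnit c.det) (hc' : IsUnit c'.det)
    (htb : b.IsUpperTriangular) (htb' : b'.IsUpperTriangular) (htc : c.IsUpperTriangular)
    (htc' : c'.IsUpperTriangular)
    (h : b * σ.permMatrix R * b' = c * τ.permMatrix R * c') : σ = τ := by
  refine perm_eq_of_permMatrix_mul_eq_mul_permMatrix (htb'.mul htc'.inv) (htb.inv.mul htc)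
    (by rw [det_mul]; exact (isUnit_nonsing_inv_det b hb).mul hc) ?_
  calc σ.permMatrix R * (b' * c'⁻¹) = b⁻¹ * (b * σ.permMatrix R * b') * c'⁻¹ := by
        simp only [Matrix.mul_assoc, nonsing_inv_mul_cancel_left _ _ hb]
    _ = b⁻¹ * c * τ.permMatrix R := by
        simp only [h, Matrix.mul_assoc, mul_nonsing_inv _ hc', Matrix.mul_one]

end CommRing

section Field

variable [Field R]

def leadingZeros {m : Type*} (A : Matrix m n R) (i : m) : Set n := {j | ∀ j' ≤ j, A i j' = 0}

variable [Fintype n]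

theorem leadingZeros_lt_transvection_mul {A : Matrix n n R} {k l c : n} (hkl : k ≠ l)
    (hk : A.IsLeadingEntry k c) (hl : A.IsLeadingEntry l c) :
    A.leadingZeros < (transvection k l (-(A k c / A l c)) * A).leadingZeros := by
  set T := transvection k l (-(A k c / A l c))
  have hrow : ∀ j, (T * A) k j = A k j - A k c / A l c * A l j := fun j => by
    rw [transvection_mul_apply_same]; ring
  have hle : A.leadingZeros ≤ (T * A).leadingZeros := by
    intro r j hj i hi
    rcases eq_or_ne r k with rfl | hr
    · have hjc : j < c := not_le.1 fun hcj => hk.2 (hj c hcj)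
      rw [hrow, hj i hi, hl.1 i (hi.trans_lt hjc)]
      ring
    · rw [transvection_mul_apply_of_ne _ _ _ _ hr]
      exact hj i hi
  have hc : c ∈ (T * A).leadingZeros k := fun i hi => by
    rcases hi.lt_or_eq with hi | rfl
    · rw [hrow, hk.1 i hi, hl.1 i hi]
      ring
    · rw [hrow, div_mul_cancel₀ _ hl.2, sub_self]
  exact Pi.lt_def.2
    ⟨hle, k, (Set.ssubset_iff_of_subset (hle k)).2 ⟨c, hc, fun h => hk.2 (h c le_rfl)⟩⟩

theorem exists_isUpperTriangular_mul_isLeadingEntry (g : Matrix n n R) (hg : IsUnit g.det) :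
    ∃ b : Matrix n n R, IsUnit b.det ∧ b.IsUpperTriangular ∧
      ∃ σ : Equiv.Perm n, ∀ k, (b * g).IsLeadingEntry k (σ k) := by
  obtain ⟨b, ⟨hb, htb⟩, hmax⟩ := Set.Finite.exists_maximalFor'
    (fun b : Matrix n n R => (b * g).leadingZeros) {b | IsUnit b.det ∧ b.IsUpperTriangular}
    (Set.toFinite _) ⟨1, by simp, blockTriangular_one⟩
  refine ⟨b, hb, htb, ?_⟩
  have hrow : ∀ k, (b * g) k ≠ 0 := fun k h => by
    refine (isUnit_iff_ne_zero.1 (det_mul b g ▸ hb.mul hg)) ?_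
    exact det_eq_zero_of_row_eq_zero k (congr_fun h)
  choose f hf using fun k => row_ne_zero_iff_exists_isLeadingEntry.1 (hrow k)
  suffices Function.Injective f from ⟨Equiv.ofBijective f this.bijective_of_finite, hf⟩
  intro k l hkl
  by_contra hne
  wlog hlt : k < l generalizing k l
  · exact this hkl.symm (Ne.symm hne) ((not_lt.1 hlt).lt_of_ne (Ne.symm hne))
  have hgrow := leadingZeros_lt_transvection_mul hne (hf k) (hkl ▸ hf l)
  set T := transvection k l (-((b * g) k (f k) / (b * g) l (f k)))
  have hT : IsUnit (T * b).det ∧ (T * b).IsUpperTriangular :=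
    ⟨by rwa [det_mul, show T.det = 1 from det_transvection_of_ne _ _ hne _, one_mul],
      (isUpperTriangular_transvection hlt _).mul htb⟩
  rw [← Matrix.mul_assoc] at hgrow
  exact hgrow.not_ge (hmax hT hgrow.le)

theorem exists_bruhat_decomposition (g : Matrix n n R) (hg : IsUnit g.det) :
    ∃ σ : Equiv.Perm n, ∃ b b' : Matrix n n R, IsUnit b.det ∧ IsUnit b'.det ∧
      b.IsUpperTriangular ∧ b'.IsUpperTriangular ∧ g = b * σ.permMatrix R * b' := by
  obtain ⟨b, hb, htb, σ, hσ⟩ := exists_isUpperTriangular_mul_isLeadingEntry g hg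
  refine ⟨σ, b⁻¹, (b * g).submatrix σ.symm id, isUnit_nonsing_inv_det b hb, ?_, htb.inv,
    fun i j (hji : j < i) => (hσ (σ.symm i)).1 j (by simpa using hji), ?_⟩
  · rw [det_permute, det_mul]
    exact ((Equiv.Perm.sign σ.symm).isUnit.map (Int.castRingHom R)).mul (hb.mul hg)
  · rw [Matrix.mul_assoc, permMatrix_mul_submatrix_symm, nonsing_inv_mul_cancel_left _ _ hb]

end Field

end Matrix

/-- Bruhat decomposition for `GL_3(F)`: every invertible 3×3 matrix `g` over a field `F`
lies in a double coset `B·w·B` for a unique permutation matrix `w`, where `B` is the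
upper triangular Borel.  (Uniqueness of `w` expresses that the six double cosets cover
`GL_3(F)` and are pairwise disjoint.) -/
theorem bruhat_decomposition_GL3 (F : Type*) [Field F]
    (g : Matrix (Fin 3) (Fin 3) F) (hg : IsUnit g.det) :
    ∃! σ : Equiv.Perm (Fin 3),
      ∃ b b' : Matrix (Fin 3) (Fin 3) F,
        IsUnit b.det ∧ IsUnit b'.det ∧
        (∀ i j : Fin 3, j < i → b i j = 0) ∧
        (∀ i j : Fin 3, j < i → b' i j = 0) ∧
        g = b * σ.permMatrix F * b' := by
  obtain ⟨σ, b, b', hb, hb', htb, htb', hg_eq⟩ := Matrix.exists_bruhat_decomposition g hg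
  refine ⟨σ, ⟨b, b', hb, hb', fun i j h => htb h, fun i j h => htb' h, hg_eq⟩, ?_⟩
  rintro τ ⟨c, c', hc, hc', htc, htc', hτ⟩
  exact Matrix.perm_eq_of_mul_permMatrix_mul_eq hc hb hb' (fun i j h => htc i j h)
    (fun i j h => htc' i j h) htb htb' (hτ.symm.trans hg_eq)
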